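/- Let N be an incidence matrix of an unbalanced unicyclic signed graph Γ on n vertices (so N is n×n square). Then det(N) = ±2. -/

import Mathlib

open Matrix BigOperators

/-- A signed graph together with an enumeration of its edges. -/
structure SignedIncidence (n m : ℕ) where
  G : SimpleGraph (Fin n)
  sigma : Fin n → Fin n → ℤ
  sigma_symm : ∀ i j, sigma i j = sigma j i
  sigma_sign : ∀ i j, G.Adj i j → sigma i j = 1 ∨ sigma i j = -1
  ends : Fin m → Fin n × Fin n
  ends_adj : ∀ ℓ, G.Adj (ends ℓ).1 (ends ℓ).2
  ends_inj : Function.Injective fun ℓ => Sym2.mk.uncurry (ends ℓ)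
  ends_surj : ∀ e ∈ G.edgeSet, ∃ ℓ, Sym2.mk.uncurry (ends ℓ) = e

namespace SignedIncidence

variable {n m : ℕ}

def edge (S : SignedIncidence n m) (ℓ : Fin m) : Sym2 (Fin n) := Sym2.mk.uncurry (S.ends ℓ)

/-- `N` is an incidence matrix of the signed graph `S`. -/
def IsIncidence (S : SignedIncidence n m) (N : Matrix (Fin n) (Fin m) ℝ) : Prop :=
  ∀ ℓ : Fin m,
    N (S.ends ℓ).1 ℓ * N (S.ends ℓ).2 ℓ = -((S.sigma (S.ends ℓ).1 (S.ends ℓ).2 : ℤ) : ℝ) ∧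
    (N (S.ends ℓ).1 ℓ = 1 ∨ N (S.ends ℓ).1 ℓ = -1) ∧
    (N (S.ends ℓ).2 ℓ = 1 ∨ N (S.ends ℓ).2 ℓ = -1) ∧
    ∀ k, k ≠ (S.ends ℓ).1 → k ≠ (S.ends ℓ).2 → N k ℓ = 0

/-- The sign of a walk (in the graph or any subgraph): product of edge signs. -/
def walkSign (S : SignedIncidence n m) {G' : SimpleGraph (Fin n)} {i j : Fin n}
    (w : G'.Walk i j) : ℤ :=
  (w.darts.map fun d => S.sigma d.toProd.1 d.toProd.2).prod

/-- A signed graph is balanced if every closed walk has sign `+1`. -/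
def Balanced (S : SignedIncidence n m) : Prop :=
  ∀ (i : Fin n) (w : S.G.Walk i i), S.walkSign w = 1

end SignedIncidence

/-
Since every entry of `N` is `0` or `±1`, `N` is an integer matrix. Each column has exactly two odd
entries, so the sum of all rows vanishes mod 2 and `2 ∣ det N`. Conversely, the column lattice of
`N` contains `eₓ - σ(x,y) e_y` for every edge; telescoping along walks it contains `e_v ∓ e_u` for
every vertex `v` (the graph is connected), and an unbalanced closed walk at `u` puts `2 e_u` in it.
These `n` vectors are the columns of a matrix of determinant `2`, which is thus a multiple of
`det N`.
-/

namespace Matrix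

variable {ι R : Type*} [Fintype ι] [DecidableEq ι] [CommRing R]

theorem dvd_det_of_forall_dvd_sum_col [Nonempty ι] (M : Matrix ι ι R) {p : R}
    (h : ∀ j, p ∣ ∑ i, M i j) : p ∣ M.det := by
  choose r hr using h
  obtain ⟨i⟩ := ‹Nonempty ι›
  have hrow : ∑ k, (1 : ι → R) k • M k = p • r := by
    ext j
    simp only [Pi.one_apply, one_smul, Pi.smul_apply, smul_eq_mul]
    exact (Finset.sum_apply j _ _).trans (hr j)
  have hdet := det_updateRow_sum M i 1
  rw [hrow, det_updateRow_smul] at hdet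
  exact ⟨_, by simpa using hdet.symm⟩

theorem det_dvd_det_of_forall_col_mem_range {M B : Matrix ι ι R}
    (h : ∀ j, B.col j ∈ LinearMap.range M.mulVecLin) : M.det ∣ B.det := by
  choose A hA using h
  refine ⟨(of fun i j => A j i).det, ?_⟩
  rw [← det_mul]
  congr 1
  ext i j
  simpa [mul_apply, mulVec, dotProduct] using (congrFun (hA j) i).symm

theorem det_updateRow_one (i : ι) (b : ι → R) : ((1 : Matrix ι ι R).updateRow i b).det = b i := by
  have hb : ∑ k, b k • (1 : Matrix ι ι R) k = b := by
    ext j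
    simp [Finset.sum_apply, one_apply]
  simpa [hb] using det_updateRow_sum (1 : Matrix ι ι R) i b

theorem det_dvd_of_single_mem_range (M : Matrix ι ι R) (u : ι) (d : R) (c : ι → R)
    (hu : Pi.single u d ∈ LinearMap.range M.mulVecLin)
    (hv : ∀ v, Pi.single v 1 - c v • Pi.single u 1 ∈ LinearMap.range M.mulVecLin) :
    M.det ∣ d := by
  -- columns `Pi.single v 1 - c v • Pi.single u 1` for `v ≠ u` and `Pi.single u d`
  set B := (1 : Matrix ι ι R).updateRow u (Function.update (-c) u d)
  have hB : ∀ v, B.col v ∈ LinearMap.range M.mulVecLin := by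
    intro v
    by_cases hvu : v = u
    · convert hu using 1
      ext x
      by_cases hxu : x = u <;> simp [B, hvu, hxu, updateRow_apply]
    · convert hv v using 1
      ext x
      by_cases hxu : x = u <;> by_cases hxv : x = v <;>
        simp [B, hvu, hxu, hxv, updateRow_apply, Ne.symm hvu]
  simpa [B, det_updateRow_one] using det_dvd_det_of_forall_col_mem_range hB

end Matrix

namespace SignedIncidence

variable {n m : ℕ} (S : SignedIncidence n m)

@[simp]
theorem walkSign_nil {G' : SimpleGraph (Fin n)} {x : Fin n} :
    S.walkSign (SimpleGraph.Walk.nil : G'.Walk x x) = 1 := by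
  simp [walkSign]

@[simp]
theorem walkSign_cons {G' : SimpleGraph (Fin n)} {x y z : Fin n} (h : G'.Adj x y)
    (p : G'.Walk y z) : S.walkSign (.cons h p) = S.sigma x y * S.walkSign p := by
  simp [walkSign]

theorem walkSign_eq_one_or_neg_one {x y : Fin n} (p : S.G.Walk x y) :
    S.walkSign p = 1 ∨ S.walkSign p = -1 := by
  induction p with
  | nil => exact .inl S.walkSign_nil
  | cons h p ih =>
    rw [walkSign_cons]
    rcases S.sigma_sign _ _ h with h' | h' <;> rcases ih with ih | ih <;> simp [h', ih]

theorem exists_walkSign_eq_neg_one (h : ¬ S.Balanced) :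
    ∃ (u : Fin n) (w : S.G.Walk u u), S.walkSign w = -1 := by
  simp only [Balanced, not_forall] at h
  obtain ⟨u, w, hw⟩ := h
  exact ⟨u, w, (S.walkSign_eq_one_or_neg_one w).resolve_left hw⟩

variable {S}

theorem IsIncidence.exists_map_intCast_eq {N : Matrix (Fin n) (Fin m) ℝ} (hN : S.IsIncidence N) :
    ∃ M : Matrix (Fin n) (Fin m) ℤ, M.map (↑) = N := by
  have hint : ∀ i ℓ, ∃ z : ℤ, (z : ℝ) = N i ℓ := by
    intro i ℓ
    obtain ⟨-, h₁, h₂, h₀⟩ := hN ℓ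
    by_cases hi₁ : i = (S.ends ℓ).1
    · subst hi₁
      rcases h₁ with h | h
      exacts [⟨1, by simp [h]⟩, ⟨-1, by simp [h]⟩]
    by_cases hi₂ : i = (S.ends ℓ).2
    · subst hi₂
      rcases h₂ with h | h
      exacts [⟨1, by simp [h]⟩, ⟨-1, by simp [h]⟩]
    exact ⟨0, by simp [h₀ i hi₁ hi₂]⟩
  choose M hM using hint
  exact ⟨M, ext hM⟩

variable {M : Matrix (Fin n) (Fin m) ℤ}

theorem IsIncidence.entries_of_edge_eq (hM : S.IsIncidence (M.map (↑)))
    {ℓ : Fin m} {x y : Fin n} (hℓ : S.edge ℓ = s(x, y)) :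
    (M x ℓ = 1 ∨ M x ℓ = -1) ∧ M x ℓ * M y ℓ = -S.sigma x y ∧
      ∀ k, k ≠ x → k ≠ y → M k ℓ = 0 := by
  obtain ⟨hprod, h₁, h₂, h₀⟩ := hM ℓ
  simp only [map_apply] at hprod h₁ h₂ h₀
  norm_cast at hprod h₁ h₂ h₀
  rcases Sym2.eq_iff.mp hℓ with ⟨rfl, rfl⟩ | ⟨rfl, rfl⟩
  · exact ⟨h₁, hprod, h₀⟩
  · exact ⟨h₂, by rw [mul_comm, hprod, S.sigma_symm], fun k hy hx => h₀ k hx hy⟩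

theorem IsIncidence.two_dvd_sum_col (hM : S.IsIncidence (M.map (↑)))
    (ℓ : Fin m) : (2 : ℤ) ∣ ∑ i, M i ℓ := by
  obtain ⟨h₁, -, h₀⟩ := hM.entries_of_edge_eq (rfl : S.edge ℓ = _)
  obtain ⟨h₂, -, -⟩ := hM.entries_of_edge_eq (Sym2.eq_swap : S.edge ℓ = _)
  rw [Fintype.sum_eq_add _ _ (S.ends_adj ℓ).ne fun k hk => h₀ k hk.1 hk.2]
  rcases h₁ with h₁ | h₁ <;> rcases h₂ with h₂ | h₂ <;> simp [h₁, h₂]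

theorem IsIncidence.single_sub_smul_single_mem_range (hM : S.IsIncidence (M.map (↑)))
    {x y : Fin n} (hxy : S.G.Adj x y) :
    Pi.single x 1 - S.sigma x y • Pi.single y 1 ∈ LinearMap.range M.mulVecLin := by
  obtain ⟨ℓ, hℓ⟩ := S.ends_surj s(x, y) hxy
  obtain ⟨h₁, hprod, h₀⟩ := hM.entries_of_edge_eq hℓ
  refine ⟨Pi.single ℓ (M x ℓ), funext fun k => ?_⟩
  by_cases hkx : k = x
  · subst hkx
    rcases h₁ with h | h <;> simp [h, hxy.ne]
  by_cases hky : k = y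
  · subst hky
    simp [hkx, mul_comm, hprod]
  · simp [hkx, hky, h₀ k hkx hky]

theorem IsIncidence.single_sub_walkSign_smul_single_mem_range (hM : S.IsIncidence (M.map (↑)))
    {x y : Fin n} (p : S.G.Walk x y) :
    Pi.single x 1 - S.walkSign p • Pi.single y 1 ∈ LinearMap.range M.mulVecLin := by
  induction p with
  | nil => simp
  | @cons a b c h p ih =>
    have hsplit : Pi.single a 1 - S.walkSign (.cons h p) • Pi.single c 1 =
        (Pi.single a 1 - S.sigma a b • Pi.single b 1) +
          S.sigma a b • (Pi.single b 1 - S.walkSign p • Pi.single c 1 : Fin n → ℤ) := by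
      rw [walkSign_cons, smul_sub, mul_smul]
      abel
    rw [hsplit]
    exact add_mem (hM.single_sub_smul_single_mem_range h) (Submodule.smul_mem _ _ ih)

end SignedIncidence

theorem unbalanced_unicyclic_incidence_det {n : ℕ} (S : SignedIncidence n n)
    (hconn : S.G.Connected) (hunb : ¬ S.Balanced)
    (N : Matrix (Fin n) (Fin n) ℝ) (hN : S.IsIncidence N) :
    N.det = 2 ∨ N.det = -2 := by
  obtain ⟨M, rfl⟩ := hN.exists_map_intCast_eq
  obtain ⟨u, w, hw⟩ := S.exists_walkSign_eq_neg_one hunb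
  have : Nonempty (Fin n) := ⟨u⟩
  have h2u := hN.single_sub_walkSign_smul_single_mem_range w
  rw [hw, neg_one_smul, sub_neg_eq_add, ← Pi.single_add, one_add_one_eq_two] at h2u
  have hdvd : M.det ∣ 2 := M.det_dvd_of_single_mem_range u 2
    (fun v => S.walkSign (hconn.preconnected v u).some)
    h2u fun v => hN.single_sub_walkSign_smul_single_mem_range _
  have hdvd' : 2 ∣ M.det := M.dvd_det_of_forall_dvd_sum_col hN.two_dvd_sum_col
  have hdet : M.det = 2 ∨ M.det = -2 :=
    Int.natAbs_eq_natAbs_iff.mp (Int.natAbs_eq_of_dvd_dvd hdvd hdvd')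
  rw [← Int.cast_det]
  rcases hdet with h | h <;> simp [h]
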